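/- arXiv:2305.17552 — 2 statements merged into one kernel-verified Lean document; each statement's English description precedes it below -/
import Mathlib

section
/- Consider a time-invariant linear dynamical system x_{t+1} = A x_t + B u_t + w_t with quadratic value function V(x) = xᵀ P x (P symmetric) for a linear baseline policy u = −K x, discount γ ∈ (0,1), and state-action value Q(x,u) = c(x,u) + γ V(A x + B u). Suppose the action at time t is u_t = −K x_t + n_t where n_t ∼ N(0,Σ) with Σ positive definite, and define the Pseudo-Disturbance ŵ_t = (c(x_t,u_t) + γ V(x_{t+1}) − Q(x_t,u_t)) Σ⁻¹ n_t, where x_{t+1} = A x_t + B u_t + w_t. Then there exists a matrix T ∈ ℝ^{d_u×d_x}, depending only on γ, B and P (and not on t, x_t or w_t), such that E[ŵ_t | x_t, w_t] = T w_t. -/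
noncomputable section

open scoped RealInnerProductSpace
open MeasureTheory ProbabilityTheory Real
open scoped NNReal ENNReal

namespace PD1Aux

lemma gauss_iff (v : ℝ≥0) (hv : v ≠ 0) (g : ℝ → ℝ) :
    Integrable g (gaussianReal 0 v) ↔
      Integrable (fun x => g x * gaussianPDFReal 0 v x) volume := by
  rw [gaussianReal_of_var_ne_zero _ hv,
    integrable_withDensity_iff (measurable_gaussianPDF _ _)
      (ae_of_all _ fun x => ENNReal.ofReal_lt_top)]
  simp_rw [gaussianPDF, ENNReal.toReal_ofReal (gaussianPDFReal_nonneg _ _ _)]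

lemma gauss_integral (v : ℝ≥0) (hv : v ≠ 0) (g : ℝ → ℝ) :
    ∫ x, g x ∂(gaussianReal 0 v) = ∫ x, gaussianPDFReal 0 v x * g x := by
  rw [gaussianReal_of_var_ne_zero _ hv]
  have : gaussianPDF 0 v = fun x => ((gaussianPDFReal 0 v x).toNNReal : ℝ≥0∞) := rfl
  rw [this, integral_withDensity_eq_integral_smul
    ((stronglyMeasurable_gaussianPDFReal 0 v).measurable.real_toNNReal) g]
  congr 1
  ext x
  simp [NNReal.smul_def, Real.coe_toNNReal _ (gaussianPDFReal_nonneg 0 v x)]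

lemma pdf_form (v : ℝ≥0) (x : ℝ) :
    gaussianPDFReal 0 v x = (Real.sqrt (2 * π * v))⁻¹ * Real.exp (-(2 * (v:ℝ))⁻¹ * x ^ 2) := by
  rw [gaussianPDFReal]
  rcases eq_or_ne v 0 with rfl | hv
  · simp
  · have hv' : (v:ℝ) ≠ 0 := by exact_mod_cast hv
    congr 1
    rw [sub_zero]
    congr 1
    field_simp

lemma gauss_integrable_id (v : ℝ≥0) : Integrable (fun y : ℝ => y) (gaussianReal 0 v) := by
  rcases eq_or_ne v 0 with rfl | hv
  · rw [gaussianReal_zero_var]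
    exact (integrable_const _).congr (ae_eq_dirac (fun y : ℝ => y)).symm
  · rw [gauss_iff v hv]
    have hv0 : 0 < (v:ℝ) := by positivity
    have hb : 0 < (2 * (v:ℝ))⁻¹ := by positivity
    have h := (integrable_mul_exp_neg_mul_sq hb).mul_const ((Real.sqrt (2 * π * v))⁻¹)
    refine h.congr (ae_of_all _ fun x => ?_)
    simp only [pdf_form]
    ring

lemma gauss_integrable_sq (v : ℝ≥0) : Integrable (fun y : ℝ => y ^ 2) (gaussianReal 0 v) := by
  rcases eq_or_ne v 0 with rfl | hv
  · rw [gaussianReal_zero_var]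
    exact (integrable_const _).congr (ae_eq_dirac (fun y : ℝ => y ^ 2)).symm
  · rw [gauss_iff v hv]
    have hv0 : 0 < (v:ℝ) := by positivity
    have hb : 0 < (2 * (v:ℝ))⁻¹ := by positivity
    have h := (integrable_rpow_mul_exp_neg_mul_sq hb (s := 2) (by norm_num)).mul_const
      ((Real.sqrt (2 * π * v))⁻¹)
    refine h.congr (ae_of_all _ fun x => ?_)
    simp only [pdf_form]
    rw [show (x : ℝ) ^ (2:ℝ) = x ^ (2:ℕ) from by
      rw [← Real.rpow_natCast x 2]; norm_num]
    ring

lemma gauss_integral_id (v : ℝ≥0) : ∫ y, y ∂(gaussianReal 0 v) = 0 := by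
  rcases eq_or_ne v 0 with rfl | hv
  · rw [gaussianReal_zero_var]; simp
  · rw [gauss_integral v hv]
    have key : ∫ x : ℝ, gaussianPDFReal 0 v x * x
        = -∫ x : ℝ, gaussianPDFReal 0 v x * x := by
      conv_lhs => rw [← integral_neg_eq_self (fun x : ℝ => gaussianPDFReal 0 v x * x) volume]
      rw [← integral_neg]
      congr 1
      ext x
      simp only [pdf_form]
      ring_nf
    linarith [key]

lemma gauss_integral_sq (v : ℝ≥0) : ∫ y, y ^ 2 ∂(gaussianReal 0 v) = v := by
  rcases eq_or_ne v 0 with rfl | hv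
  · rw [gaussianReal_zero_var]; simp
  · rw [gauss_integral v hv]
    have hv0 : 0 < (v:ℝ) := by positivity
    have hb : 0 < (2 * (v:ℝ))⁻¹ := by positivity
    have h1 : ∫ x : ℝ, gaussianPDFReal 0 v x * x ^ 2
        = (Real.sqrt (2 * π * v))⁻¹ * ∫ x : ℝ, |x| ^ 2 * Real.exp (-(2 * (v:ℝ))⁻¹ * |x| ^ 2) := by
      rw [← integral_const_mul]
      congr 1; ext x
      simp only [pdf_form, sq_abs]
      ring
    have h2 : ∫ x : ℝ, |x| ^ 2 * Real.exp (-(2 * (v:ℝ))⁻¹ * |x| ^ 2)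
        = 2 * ∫ x in Set.Ioi (0:ℝ), x ^ 2 * Real.exp (-(2 * (v:ℝ))⁻¹ * x ^ 2) :=
      integral_comp_abs (f := fun x => x ^ 2 * Real.exp (-(2 * (v:ℝ))⁻¹ * x ^ 2))
    have h3 : ∫ x in Set.Ioi (0:ℝ), x ^ 2 * Real.exp (-(2 * (v:ℝ))⁻¹ * x ^ 2)
        = ((2 * (v:ℝ))⁻¹ : ℝ) ^ (-(((2:ℝ) + 1)) / 2) * (1 / 2) * Real.Gamma (((2:ℝ) + 1) / 2) := by
      rw [← integral_rpow_mul_exp_neg_mul_rpow (by norm_num : (0:ℝ) < 2) (by norm_num : (-1:ℝ) < 2) hb]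
      refine setIntegral_congr_fun measurableSet_Ioi (fun x hx => ?_)
      rw [show (x : ℝ) ^ (2:ℝ) = x ^ (2:ℕ) from by rw [← Real.rpow_natCast x 2]; norm_num]
    have hG : Real.Gamma (((2:ℝ) + 1) / 2) = Real.sqrt π / 2 := by
      have : ((2:ℝ) + 1) / 2 = 1 / 2 + 1 := by norm_num
      rw [this, Real.Gamma_add_one (by norm_num), Real.Gamma_one_half_eq]
      ring
    have h2v : (0:ℝ) < 2 * (v:ℝ) := by positivity
    have hrp : ((2 * (v:ℝ))⁻¹ : ℝ) ^ (-(((2:ℝ) + 1)) / 2)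
        = (2 * (v:ℝ)) * Real.sqrt (2 * (v:ℝ)) := by
      rw [Real.inv_rpow h2v.le, ← Real.rpow_neg h2v.le]
      rw [show (-((-(((2:ℝ) + 1))) / 2)) = 1 + 1/2 from by norm_num]
      rw [Real.rpow_add h2v, Real.rpow_one, ← Real.sqrt_eq_rpow]
    have hs : Real.sqrt (2 * π * (v:ℝ)) = Real.sqrt (2 * (v:ℝ)) * Real.sqrt π := by
      rw [show 2 * π * (v:ℝ) = (2 * (v:ℝ)) * π from by ring, Real.sqrt_mul h2v.le]
    rw [h1, h2, h3, hG, hrp, hs]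
    have hsne : Real.sqrt (2 * (v:ℝ)) ≠ 0 := by positivity
    have hpne : Real.sqrt π ≠ 0 := by
      have := Real.pi_pos; positivity
    field_simp

lemma quad_expand {E : Type*} [NormedAddCommGroup E] [InnerProductSpace ℝ E]
    (P : E →L[ℝ] E) (hP : ∀ v v' : E, ⟪P v, v'⟫ = ⟪v, P v'⟫) (z w : E) :
    ⟪z + w, P (z + w)⟫ = ⟪z, P z⟫ + 2 * ⟪z, P w⟫ + ⟪w, P w⟫ := by
  have hwz : ⟪w, P z⟫ = ⟪z, P w⟫ := by
    rw [← hP z w]; exact real_inner_comm _ _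
  simp only [map_add, inner_add_left, inner_add_right]
  rw [hwz]
  ring

end PD1Aux

open scoped RealInnerProductSpace

abbrev Ev (d : ℕ) := EuclideanSpace ℝ (Fin d)

/-- **Lemma 1 (PD1 is a linear transformation of the true disturbance).**
For a linear system `x_{t+1} = A x_t + B u_t + w_t` with quadratic value function
`V(x) = xᵀ P x` (`P` symmetric), discount `γ ∈ (0,1)`,
`Q(x,u) = c(x,u) + γ V(Ax + Bu)`, and exploration `u_t = −K x_t + n_t`, `n_t ∼ N(0,Σ)`
(`Σ` positive definite), the Pseudo-Disturbance
`ŵ_t = (c(x_t,u_t) + γ V(x_{t+1}) − Q(x_t,u_t)) Σ⁻¹ n_t`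
satisfies `E[ŵ_t | x_t, w_t] = T w_t` for a matrix `T` depending only on `γ, B, P`
(not on `t`, `x_t`, `w_t`, `A`, `K` or `c`). -/
theorem pd1_expectation_linear (dx du : ℕ) (γ : ℝ) (hγ0 : 0 < γ) (hγ1 : γ < 1)
    (B : Ev du →L[ℝ] Ev dx)
    (P : Ev dx →L[ℝ] Ev dx)
    (hP_symm : ∀ v v' : Ev dx, ⟪P v, v'⟫ = ⟪v, P v'⟫) :
    ∃ T : Ev dx →L[ℝ] Ev du,
      ∀ (A : Ev dx →L[ℝ] Ev dx) (K : Ev dx →L[ℝ] Ev du)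
        (c : Ev dx → Ev du → ℝ)
        (Sg Sginv : Ev du →L[ℝ] Ev du),
        (∀ v v' : Ev du, ⟪Sg v, v'⟫ = ⟪v, Sg v'⟫) →
        (∀ v : Ev du, v ≠ 0 → 0 < ⟪v, Sg v⟫) →
        Sginv ∘L Sg = ContinuousLinearMap.id ℝ (Ev du) →
        Sg ∘L Sginv = ContinuousLinearMap.id ℝ (Ev du) →
        ∀ (Ω : Type) (_ : MeasurableSpace Ω) (Pr : MeasureTheory.Measure Ω),
          MeasureTheory.IsProbabilityMeasure Pr →
          ∀ (n : Ω → Ev du), Measurable n →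
          -- n is Gaussian with mean 0 and covariance Σ
          (∀ a : Ev du,
            Pr.map (fun ω => ⟪a, n ω⟫) = ProbabilityTheory.gaussianReal 0 (⟪a, Sg a⟫).toNNReal) →
          ∀ (x w : Ev dx),
            (∫ ω,
              ((fun V : Ev dx → ℝ => fun Q : Ev dx → Ev du → ℝ =>
                  (c x (-(K x) + n ω) + γ * V (A x + B (-(K x) + n ω) + w)
                    - Q x (-(K x) + n ω)) • Sginv (n ω))
               (fun z => ⟪z, P z⟫)
               (fun y v => c y v + γ * ⟪A y + B v, P (A y + B v)⟫)) ∂Pr)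
            = T w := by
  classical
  refine ⟨(2 * γ) • ((ContinuousLinearMap.adjoint B).comp P), ?_⟩
  intro A K c Sg Sginv hSg_symm hSg_pos hinv1 _hinv2 Ω mΩ Pr hPr n hn hgauss x w
  -- basic measurability
  have hφm : ∀ a : Ev du, Measurable fun ω => ⟪a, n ω⟫ :=
    fun a => measurable_const.inner hn
  -- nonnegativity of the quadratic form
  have hq : ∀ a : Ev du, 0 ≤ ⟪a, Sg a⟫ := by
    intro a
    rcases eq_or_ne a 0 with rfl | ha
    · simp
    · exact (hSg_pos a ha).le
  -- first moments
  have hInt1 : ∀ a : Ev du, Integrable (fun ω => ⟪a, n ω⟫) Pr := by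
    intro a
    have h := PD1Aux.gauss_integrable_id (⟪a, Sg a⟫.toNNReal)
    rw [← hgauss a] at h
    have := (integrable_map_measure aestronglyMeasurable_id (hφm a).aemeasurable).mp h
    simpa [Function.comp] using this
  have hM1 : ∀ a : Ev du, ∫ ω, ⟪a, n ω⟫ ∂Pr = 0 := by
    intro a
    calc ∫ ω, ⟪a, n ω⟫ ∂Pr
        = ∫ y, y ∂(Pr.map fun ω => ⟪a, n ω⟫) :=
          (integral_map (hφm a).aemeasurable aestronglyMeasurable_id).symm
      _ = 0 := by rw [hgauss a]; exact PD1Aux.gauss_integral_id _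
  -- second moments
  have hInt2 : ∀ a : Ev du, Integrable (fun ω => ⟪a, n ω⟫ ^ 2) Pr := by
    intro a
    have h := PD1Aux.gauss_integrable_sq (⟪a, Sg a⟫.toNNReal)
    rw [← hgauss a] at h
    have := (integrable_map_measure
      (continuous_pow 2).aestronglyMeasurable (hφm a).aemeasurable).mp h
    exact this
  have hM2 : ∀ a : Ev du, ∫ ω, ⟪a, n ω⟫ ^ 2 ∂Pr = ⟪a, Sg a⟫ := by
    intro a
    calc ∫ ω, ⟪a, n ω⟫ ^ 2 ∂Pr
        = ∫ y, y ^ 2 ∂(Pr.map fun ω => ⟪a, n ω⟫) :=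
          (integral_map (hφm a).aemeasurable (continuous_pow 2).aestronglyMeasurable).symm
      _ = ((⟪a, Sg a⟫.toNNReal : ℝ≥0) : ℝ) := by
          rw [hgauss a]; exact PD1Aux.gauss_integral_sq _
      _ = ⟪a, Sg a⟫ := Real.coe_toNNReal _ (hq a)
  -- symmetric-form commutation
  have hcomm : ∀ a b : Ev du, ⟪b, Sg a⟫ = ⟪a, Sg b⟫ := by
    intro a b
    rw [← hSg_symm a b]; exact real_inner_comm _ _
  -- polarization identity
  have hpol : ∀ a b : Ev du, (fun ω => ⟪a, n ω⟫ * ⟪b, n ω⟫)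
      = fun ω => (⟪a + b, n ω⟫ ^ 2 - ⟪a - b, n ω⟫ ^ 2) / 4 := by
    intro a b
    funext ω
    simp only [inner_add_left, inner_sub_left]
    ring
  have hIntProd : ∀ a b : Ev du, Integrable (fun ω => ⟪a, n ω⟫ * ⟪b, n ω⟫) Pr := by
    intro a b
    rw [hpol a b]
    exact ((hInt2 (a + b)).sub (hInt2 (a - b))).div_const 4
  have hMProd : ∀ a b : Ev du, ∫ ω, ⟪a, n ω⟫ * ⟪b, n ω⟫ ∂Pr = ⟪a, Sg b⟫ := by
    intro a b
    rw [hpol a b]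
    rw [integral_div, integral_sub (hInt2 (a + b)) (hInt2 (a - b)), hM2, hM2]
    simp only [map_add, map_sub, inner_add_left, inner_add_right, inner_sub_left,
      inner_sub_right]
    rw [hcomm a b]
    ring
  -- abbreviations
  set b : Ev du := (2 * γ) • (ContinuousLinearMap.adjoint B) (P w) with hbdef
  set α : ℝ := γ * (2 * ⟪A x + B (-(K x)), P w⟫ + ⟪w, P w⟫) with hαdef
  set e : Fin du → Ev du := fun i => EuclideanSpace.single i (1:ℝ) with hedef
  -- pointwise simplification of the integrand
  have hpoint : (fun ω =>
      (c x (-(K x) + n ω) + γ * ⟪A x + B (-(K x) + n ω) + w, P (A x + B (-(K x) + n ω) + w)⟫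
        - (c x (-(K x) + n ω) + γ * ⟪A x + B (-(K x) + n ω), P (A x + B (-(K x) + n ω))⟫))
        • Sginv (n ω))
      = fun ω => ∑ i, ((α + ⟪b, n ω⟫) * ⟪e i, n ω⟫) • Sginv (e i) := by
    funext ω
    have hz : A x + B (-(K x) + n ω) = (A x + B (-(K x))) + B (n ω) := by
      rw [map_add, ← add_assoc]
    have hscal : c x (-(K x) + n ω)
        + γ * ⟪A x + B (-(K x) + n ω) + w, P (A x + B (-(K x) + n ω) + w)⟫
        - (c x (-(K x) + n ω) + γ * ⟪A x + B (-(K x) + n ω), P (A x + B (-(K x) + n ω))⟫)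
        = α + ⟪b, n ω⟫ := by
      have hq1 : ⟪(A x + B (-(K x)) + B (n ω)) + w, P ((A x + B (-(K x)) + B (n ω)) + w)⟫
          = ⟪A x + B (-(K x)) + B (n ω), P (A x + B (-(K x)) + B (n ω))⟫
            + 2 * ⟪A x + B (-(K x)) + B (n ω), P w⟫ + ⟪w, P w⟫ :=
        PD1Aux.quad_expand P hP_symm _ _
      have hq2 : ⟪A x + B (-(K x)) + B (n ω), P w⟫
          = ⟪A x + B (-(K x)), P w⟫ + ⟪B (n ω), P w⟫ := inner_add_left _ _ _
      have e3 : ⟪b, n ω⟫ = 2 * γ * ⟪B (n ω), P w⟫ := by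
        rw [hbdef, real_inner_smul_left, ContinuousLinearMap.adjoint_inner_left,
          real_inner_comm]
      rw [hz, hq1, hq2, e3, hαdef]
      ring
    rw [hscal]
    -- expand `Sginv (n ω)` over the orthonormal basis
    have hbasis : Sginv (n ω) = ∑ i, ⟪e i, n ω⟫ • Sginv (e i) := by
      conv_lhs => rw [← (EuclideanSpace.basisFun (Fin du) ℝ).sum_repr (n ω)]
      rw [map_sum]
      refine Finset.sum_congr rfl fun i _ => ?_
      rw [ContinuousLinearMap.map_smul]
      simp [hedef, EuclideanSpace.basisFun_repr, EuclideanSpace.basisFun_apply,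
        EuclideanSpace.inner_single_left]
    rw [hbasis, Finset.smul_sum]
    refine Finset.sum_congr rfl fun i _ => ?_
    rw [smul_smul]
  rw [hpoint]
  -- integrate term by term
  have hIntScal : ∀ i : Fin du,
      Integrable (fun ω => (α + ⟪b, n ω⟫) * ⟪e i, n ω⟫) Pr := by
    intro i
    have : (fun ω => (α + ⟪b, n ω⟫) * ⟪e i, n ω⟫)
        = fun ω => α * ⟪e i, n ω⟫ + ⟪b, n ω⟫ * ⟪e i, n ω⟫ := by
      funext ω; ring
    rw [this]
    exact ((hInt1 (e i)).const_mul α).add (hIntProd b (e i))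
  rw [integral_finset_sum _ (fun i _ => (hIntScal i).smul_const (Sginv (e i)))]
  have hterm : ∀ i : Fin du,
      (∫ ω, ((α + ⟪b, n ω⟫) * ⟪e i, n ω⟫) • Sginv (e i) ∂Pr)
        = ⟪e i, Sg b⟫ • Sginv (e i) := by
    intro i
    rw [integral_smul_const]
    congr 1
    have h1 : (fun ω => (α + ⟪b, n ω⟫) * ⟪e i, n ω⟫)
        = fun ω => α * ⟪e i, n ω⟫ + ⟪b, n ω⟫ * ⟪e i, n ω⟫ := by
      funext ω; ring
    rw [h1, integral_add ((hInt1 (e i)).const_mul α) (hIntProd b (e i)),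
      integral_const_mul, hM1, hMProd, hcomm b (e i)]
    ring
  simp only [hterm]
  -- resum the basis expansion
  have hsum : ∑ i, ⟪e i, Sg b⟫ • Sginv (e i) = Sginv (Sg b) := by
    conv_rhs => rw [← (EuclideanSpace.basisFun (Fin du) ℝ).sum_repr (Sg b)]
    rw [map_sum]
    refine Finset.sum_congr rfl fun i _ => ?_
    rw [ContinuousLinearMap.map_smul]
    simp [hedef, EuclideanSpace.basisFun_repr, EuclideanSpace.basisFun_apply,
      EuclideanSpace.inner_single_left]
  rw [hsum]
  have hSS : Sginv (Sg b) = b := by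
    have := DFunLike.congr_fun hinv1 b
    simpa using this
  rw [hSS, hbdef]
  simp [ContinuousLinearMap.smul_apply, ContinuousLinearMap.comp_apply]
end
end

section
/- Let n be a Gaussian random vector on ℝ^m with mean zero and positive-definite covariance Σ, let P ∈ ℝ^{d×d}, a ∈ ℝ^d and B ∈ ℝ^{d×m}. Then E[((a + B n)ᵀ P (a + B n)) · Σ⁻¹ n] = Bᵀ (P + Pᵀ) a. In particular, if P is symmetric this equals 2 Bᵀ P a. -/
noncomputable section

open scoped RealInnerProductSpace
open MeasureTheory Real ProbabilityTheory Filter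
open scoped NNReal ENNReal

lemma pd1_abs_sq_bound (x y : ℝ) : |x * y| ≤ |x| ^ 2 + |y| ^ 2 := by
  rw [abs_mul]
  nlinarith [sq_nonneg (|x| - |y|), abs_nonneg x, abs_nonneg y]

lemma pd1_abs_cube_bound (x y z : ℝ) : |x * y * z| ≤ |x| ^ 3 + |y| ^ 3 + |z| ^ 3 := by
  rw [abs_mul, abs_mul]
  set A := |x|; set B := |y|; set C := |z|
  have hA : 0 ≤ A := abs_nonneg x
  have hB : 0 ≤ B := abs_nonneg y
  have hC : 0 ≤ C := abs_nonneg z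
  nlinarith [mul_nonneg (add_nonneg (add_nonneg hA hB) hC)
    (add_nonneg (add_nonneg (sq_nonneg (A - B)) (sq_nonneg (B - C))) (sq_nonneg (A - C))),
    mul_nonneg (mul_nonneg hA hB) hC]

lemma pd1_integral_sq_exp {b : ℝ} (hb : 0 < b) :
    ∫ x : ℝ, x ^ 2 * Real.exp (-b * x ^ 2) = Real.sqrt (π / b) / (2 * b) := by
  have hderiv : ∀ x : ℝ, HasDerivAt (fun x : ℝ => x * Real.exp (-b * x ^ 2))
      (Real.exp (-b * x ^ 2) - 2 * b * (x ^ 2 * Real.exp (-b * x ^ 2))) x := by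
    intro x
    have h1 : HasDerivAt (fun x : ℝ => -b * x ^ 2) (-b * (2 * x)) x := by
      simpa using (hasDerivAt_pow 2 x).const_mul (-b)
    have h3 := (hasDerivAt_id x).mul h1.exp
    convert h3 using 1
    · rfl
    · rfl
    · rfl
    simp [pow_two]
    ring
  have hint1 : Integrable (fun x : ℝ => Real.exp (-b * x ^ 2)) := integrable_exp_neg_mul_sq hb
  have hint2 : Integrable (fun x : ℝ => x ^ 2 * Real.exp (-b * x ^ 2)) := by
    have h := integrable_rpow_mul_exp_neg_mul_sq hb (s := 2) (by norm_num)
    refine h.congr ?_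
    filter_upwards with x
    rw [show ((2 : ℝ)) = ((2 : ℕ) : ℝ) by norm_num, Real.rpow_natCast]
  have hint' : Integrable (fun x : ℝ =>
      Real.exp (-b * x ^ 2) - 2 * b * (x ^ 2 * Real.exp (-b * x ^ 2))) :=
    hint1.sub (hint2.const_mul _)
  have htop : Filter.Tendsto (fun x : ℝ => x * Real.exp (-b * x ^ 2))
      Filter.atTop (nhds 0) := by
    have h := rpow_mul_exp_neg_mul_sq_isLittleO_exp_neg hb 1
    have h2 : (fun x : ℝ => x * Real.exp (-b * x ^ 2)) =o[Filter.atTop]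
        fun x : ℝ => Real.exp (-(1/2) * x) := by
      refine h.congr' ?_ (Filter.EventuallyEq.rfl)
      filter_upwards with x
      rw [Real.rpow_one]
    have h3 : Filter.Tendsto (fun x : ℝ => Real.exp (-(1/2) * x)) Filter.atTop (nhds 0) := by
      have h4 : Filter.Tendsto (fun x : ℝ => (1/2 : ℝ) * x) Filter.atTop Filter.atTop :=
        Filter.tendsto_const_mul_atTop_of_pos (by norm_num) |>.mpr Filter.tendsto_id
      have := Real.tendsto_exp_neg_atTop_nhds_zero.comp h4
      refine this.congr fun x => ?_
      simp [Function.comp]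
    exact h2.isBigO.trans_tendsto h3
  have hbot : Filter.Tendsto (fun x : ℝ => x * Real.exp (-b * x ^ 2))
      Filter.atBot (nhds 0) := by
    have h := (htop.neg.comp Filter.tendsto_neg_atBot_atTop)
    simp only [neg_zero] at h
    refine h.congr fun x => ?_
    simp [Function.comp]
  have h0 := integral_of_hasDerivAt_of_tendsto hderiv hint' hbot htop
  rw [sub_zero] at h0
  rw [integral_sub hint1 (hint2.const_mul _), integral_const_mul, integral_gaussian] at h0
  have hb' : (2 : ℝ) * b ≠ 0 := by positivity
  field_simp at h0 ⊢
  linarith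

lemma pd1_gaussianReal_withDensity {v : ℝ≥0} (hv : v ≠ 0) :
    gaussianReal 0 v = (volume : Measure ℝ).withDensity
      (fun x => ((gaussianPDFReal 0 v x).toNNReal : ℝ≥0∞)) := by
  rw [gaussianReal_of_var_ne_zero _ hv]
  rfl

lemma pd1_gauss_abs_pow_integrable {v : ℝ≥0} (hv : v ≠ 0) (k : ℕ) :
    Integrable (fun x : ℝ => |x| ^ k) (gaussianReal 0 v) := by
  have hv' : (0 : ℝ) < v := by exact_mod_cast pos_iff_ne_zero.mpr hv
  have hb : (0 : ℝ) < (2 * (v:ℝ))⁻¹ := by positivity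
  rw [pd1_gaussianReal_withDensity hv,
    integrable_withDensity_iff_integrable_smul
      (measurable_gaussianPDFReal 0 v).real_toNNReal]
  have base := (integrable_rpow_mul_exp_neg_mul_sq hb (s := k)
    (by exact_mod_cast neg_one_lt_zero.trans_le (Nat.cast_nonneg k))).abs
  have base2 : Integrable (fun x : ℝ => |x| ^ k * Real.exp (-(2 * (v:ℝ))⁻¹ * x ^ 2)) := by
    refine base.congr ?_
    filter_upwards with x
    rw [Real.rpow_natCast, abs_mul, abs_of_pos (Real.exp_pos _), abs_pow]
  refine ((base2.const_mul ((Real.sqrt (2 * π * (v:ℝ)))⁻¹)).congr ?_)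
  filter_upwards with x
  have hexp : -(x - 0) ^ 2 / (2 * (v:ℝ)) = -(2 * (v:ℝ))⁻¹ * x ^ 2 := by
    field_simp
    ring
  rw [NNReal.smul_def, smul_eq_mul, Real.coe_toNNReal _ (gaussianPDFReal_nonneg 0 v x)]
  simp only [gaussianPDFReal_def, hexp]
  ring

lemma pd1_gauss_sq_integral {v : ℝ≥0} (hv : v ≠ 0) :
    ∫ x : ℝ, x ^ 2 ∂(gaussianReal 0 v) = (v : ℝ) := by
  have hv' : (0 : ℝ) < v := by exact_mod_cast pos_iff_ne_zero.mpr hv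
  have hb : (0 : ℝ) < (2 * (v:ℝ))⁻¹ := by positivity
  rw [pd1_gaussianReal_withDensity hv,
    integral_withDensity_eq_integral_smul
      (measurable_gaussianPDFReal 0 v).real_toNNReal]
  have heq : (fun x : ℝ => ((gaussianPDFReal 0 v x).toNNReal : ℝ≥0) • x ^ 2)
      = fun x : ℝ => (Real.sqrt (2 * π * v))⁻¹ *
        (x ^ 2 * Real.exp (-(2 * (v:ℝ))⁻¹ * x ^ 2)) := by
    funext x
    have hexp : -(x - 0) ^ 2 / (2 * (v:ℝ)) = -(2 * (v:ℝ))⁻¹ * x ^ 2 := by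
      field_simp
      ring
    rw [NNReal.smul_def, smul_eq_mul, Real.coe_toNNReal _ (gaussianPDFReal_nonneg 0 v x)]
    simp only [gaussianPDFReal_def, hexp]
    ring
  rw [heq, integral_const_mul, pd1_integral_sq_exp hb]
  have h1 : π / ((2 * (v:ℝ))⁻¹) = 2 * π * v := by
    field_simp
  rw [h1]
  have h2 : (0 : ℝ) < 2 * π * (v:ℝ) := by positivity
  have h3 : Real.sqrt (2 * π * (v:ℝ)) ≠ 0 := ne_of_gt (Real.sqrt_pos.mpr h2)
  field_simp

section Moments

variable {m : ℕ} {Ω : Type} [MeasurableSpace Ω] {Pr : Measure Ω}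
  [IsProbabilityMeasure Pr] {n : Ω → EuclideanSpace ℝ (Fin m)}
  {Sg : EuclideanSpace ℝ (Fin m) →L[ℝ] EuclideanSpace ℝ (Fin m)}

lemma pd1_Xmeas (hn_meas : Measurable n) (u : EuclideanSpace ℝ (Fin m)) :
    Measurable (fun ω => ⟪u, n ω⟫) :=
  ((continuous_const.inner continuous_id).measurable).comp hn_meas

lemma pd1_habs (hn_meas : Measurable n)
    (hSg_pos : ∀ v : EuclideanSpace ℝ (Fin m), v ≠ 0 → 0 < ⟪v, Sg v⟫)
    (hgauss : ∀ a : EuclideanSpace ℝ (Fin m),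
      Pr.map (fun ω => ⟪a, n ω⟫) = gaussianReal 0 (⟪a, Sg a⟫).toNNReal)
    (u : EuclideanSpace ℝ (Fin m)) (k : ℕ) :
    Integrable (fun ω => |⟪u, n ω⟫| ^ k) Pr := by
  by_cases hu : u = 0
  · simp only [hu, inner_zero_left, abs_zero]
    exact integrable_const _
  · have hpos := hSg_pos u hu
    have hv : (⟪u, Sg u⟫).toNNReal ≠ 0 := (Real.toNNReal_pos.mpr hpos).ne'
    have hXm := pd1_Xmeas hn_meas u
    have h1 : Integrable (fun x : ℝ => |x| ^ k) (Pr.map fun ω => ⟪u, n ω⟫) := by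
      rw [hgauss u]; exact pd1_gauss_abs_pow_integrable hv k
    have h2 := (integrable_map_measure
      ((continuous_abs.pow k).measurable).aestronglyMeasurable hXm.aemeasurable).mp h1
    exact h2

lemma pd1_int1 (hn_meas : Measurable n)
    (hSg_pos : ∀ v : EuclideanSpace ℝ (Fin m), v ≠ 0 → 0 < ⟪v, Sg v⟫)
    (hgauss : ∀ a : EuclideanSpace ℝ (Fin m),
      Pr.map (fun ω => ⟪a, n ω⟫) = gaussianReal 0 (⟪a, Sg a⟫).toNNReal)
    (u : EuclideanSpace ℝ (Fin m)) :
    Integrable (fun ω => ⟪u, n ω⟫) Pr := by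
  refine (pd1_habs hn_meas hSg_pos hgauss u 1).mono'
    (pd1_Xmeas hn_meas u).aestronglyMeasurable ?_
  filter_upwards with ω
  simp [Real.norm_eq_abs]

lemma pd1_int2 (hn_meas : Measurable n)
    (hSg_pos : ∀ v : EuclideanSpace ℝ (Fin m), v ≠ 0 → 0 < ⟪v, Sg v⟫)
    (hgauss : ∀ a : EuclideanSpace ℝ (Fin m),
      Pr.map (fun ω => ⟪a, n ω⟫) = gaussianReal 0 (⟪a, Sg a⟫).toNNReal)
    (u w : EuclideanSpace ℝ (Fin m)) :
    Integrable (fun ω => ⟪u, n ω⟫ * ⟪w, n ω⟫) Pr := by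
  refine Integrable.mono'
    ((pd1_habs hn_meas hSg_pos hgauss u 2).add (pd1_habs hn_meas hSg_pos hgauss w 2))
    ((pd1_Xmeas hn_meas u).mul (pd1_Xmeas hn_meas w)).aestronglyMeasurable ?_
  filter_upwards with ω
  rw [Real.norm_eq_abs]
  exact pd1_abs_sq_bound _ _

lemma pd1_int3 (hn_meas : Measurable n)
    (hSg_pos : ∀ v : EuclideanSpace ℝ (Fin m), v ≠ 0 → 0 < ⟪v, Sg v⟫)
    (hgauss : ∀ a : EuclideanSpace ℝ (Fin m),
      Pr.map (fun ω => ⟪a, n ω⟫) = gaussianReal 0 (⟪a, Sg a⟫).toNNReal)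
    (x y z : EuclideanSpace ℝ (Fin m)) :
    Integrable (fun ω => ⟪x, n ω⟫ * ⟪y, n ω⟫ * ⟪z, n ω⟫) Pr := by
  refine Integrable.mono'
    (((pd1_habs hn_meas hSg_pos hgauss x 3).add (pd1_habs hn_meas hSg_pos hgauss y 3)).add
      (pd1_habs hn_meas hSg_pos hgauss z 3))
    (((pd1_Xmeas hn_meas x).mul (pd1_Xmeas hn_meas y)).mul
      (pd1_Xmeas hn_meas z)).aestronglyMeasurable ?_
  filter_upwards with ω
  rw [Real.norm_eq_abs]
  exact pd1_abs_cube_bound _ _ _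

lemma pd1_intcube (hn_meas : Measurable n)
    (hSg_pos : ∀ v : EuclideanSpace ℝ (Fin m), v ≠ 0 → 0 < ⟪v, Sg v⟫)
    (hgauss : ∀ a : EuclideanSpace ℝ (Fin m),
      Pr.map (fun ω => ⟪a, n ω⟫) = gaussianReal 0 (⟪a, Sg a⟫).toNNReal)
    (u : EuclideanSpace ℝ (Fin m)) :
    Integrable (fun ω => ⟪u, n ω⟫ ^ 3) Pr := by
  refine (pd1_int3 hn_meas hSg_pos hgauss u u u).congr ?_
  filter_upwards with ω
  ring

lemma pd1_intsq (hn_meas : Measurable n)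
    (hSg_pos : ∀ v : EuclideanSpace ℝ (Fin m), v ≠ 0 → 0 < ⟪v, Sg v⟫)
    (hgauss : ∀ a : EuclideanSpace ℝ (Fin m),
      Pr.map (fun ω => ⟪a, n ω⟫) = gaussianReal 0 (⟪a, Sg a⟫).toNNReal)
    (u : EuclideanSpace ℝ (Fin m)) :
    Integrable (fun ω => ⟪u, n ω⟫ ^ 2) Pr := by
  refine (pd1_int2 hn_meas hSg_pos hgauss u u).congr ?_
  filter_upwards with ω
  ring

lemma pd1_map_neg (hgauss : ∀ a : EuclideanSpace ℝ (Fin m),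
      Pr.map (fun ω => ⟪a, n ω⟫) = gaussianReal 0 (⟪a, Sg a⟫).toNNReal)
    (u : EuclideanSpace ℝ (Fin m)) :
    Pr.map (fun ω => ⟪-u, n ω⟫) = Pr.map (fun ω => ⟪u, n ω⟫) := by
  rw [hgauss, hgauss]
  congr 2
  simp

lemma pd1_mean_zero (hn_meas : Measurable n)
    (hgauss : ∀ a : EuclideanSpace ℝ (Fin m),
      Pr.map (fun ω => ⟪a, n ω⟫) = gaussianReal 0 (⟪a, Sg a⟫).toNNReal)
    (u : EuclideanSpace ℝ (Fin m)) :
    ∫ ω, ⟪u, n ω⟫ ∂Pr = 0 := by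
  have h1 : ∫ ω, ⟪u, n ω⟫ ∂Pr = ∫ x, x ∂(Pr.map fun ω => ⟪u, n ω⟫) :=
    (integral_map (pd1_Xmeas hn_meas u).aemeasurable
      measurable_id.aestronglyMeasurable).symm
  have h2 : ∫ ω, ⟪-u, n ω⟫ ∂Pr = ∫ x, x ∂(Pr.map fun ω => ⟪-u, n ω⟫) :=
    (integral_map (pd1_Xmeas hn_meas (-u)).aemeasurable
      measurable_id.aestronglyMeasurable).symm
  have h3 : ∫ ω, ⟪-u, n ω⟫ ∂Pr = -∫ ω, ⟪u, n ω⟫ ∂Pr := by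
    rw [← integral_neg]
    congr 1
    funext ω
    simp
  rw [pd1_map_neg hgauss u, ← h1] at h2
  rw [h2] at h3
  linarith

lemma pd1_cube_zero (hn_meas : Measurable n)
    (hgauss : ∀ a : EuclideanSpace ℝ (Fin m),
      Pr.map (fun ω => ⟪a, n ω⟫) = gaussianReal 0 (⟪a, Sg a⟫).toNNReal)
    (u : EuclideanSpace ℝ (Fin m)) :
    ∫ ω, ⟪u, n ω⟫ ^ 3 ∂Pr = 0 := by
  have hg : Measurable (fun x : ℝ => x ^ 3) := measurable_id.pow_const 3
  have h1 : ∫ ω, ⟪u, n ω⟫ ^ 3 ∂Pr = ∫ x, x ^ 3 ∂(Pr.map fun ω => ⟪u, n ω⟫) :=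
    (integral_map (pd1_Xmeas hn_meas u).aemeasurable hg.aestronglyMeasurable).symm
  have h2 : ∫ ω, ⟪-u, n ω⟫ ^ 3 ∂Pr = ∫ x, x ^ 3 ∂(Pr.map fun ω => ⟪-u, n ω⟫) :=
    (integral_map (pd1_Xmeas hn_meas (-u)).aemeasurable hg.aestronglyMeasurable).symm
  have h3 : ∫ ω, ⟪-u, n ω⟫ ^ 3 ∂Pr = -∫ ω, ⟪u, n ω⟫ ^ 3 ∂Pr := by
    rw [← integral_neg]
    congr 1
    funext ω
    simp [inner_neg_left]
    ring
  rw [pd1_map_neg hgauss u, ← h1] at h2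
  rw [h2] at h3
  linarith

lemma pd1_sq_integral (hn_meas : Measurable n)
    (hSg_pos : ∀ v : EuclideanSpace ℝ (Fin m), v ≠ 0 → 0 < ⟪v, Sg v⟫)
    (hgauss : ∀ a : EuclideanSpace ℝ (Fin m),
      Pr.map (fun ω => ⟪a, n ω⟫) = gaussianReal 0 (⟪a, Sg a⟫).toNNReal)
    (u : EuclideanSpace ℝ (Fin m)) :
    ∫ ω, ⟪u, n ω⟫ ^ 2 ∂Pr = ⟪u, Sg u⟫ := by
  by_cases hu : u = 0
  · simp [hu]
  · have hpos := hSg_pos u hu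
    have hv : (⟪u, Sg u⟫).toNNReal ≠ 0 := (Real.toNNReal_pos.mpr hpos).ne'
    have hg : Measurable (fun x : ℝ => x ^ 2) := measurable_id.pow_const 2
    have h1 : ∫ ω, ⟪u, n ω⟫ ^ 2 ∂Pr = ∫ x, x ^ 2 ∂(Pr.map fun ω => ⟪u, n ω⟫) :=
      (integral_map (pd1_Xmeas hn_meas u).aemeasurable hg.aestronglyMeasurable).symm
    rw [h1, hgauss u, pd1_gauss_sq_integral hv, Real.coe_toNNReal _ hpos.le]

lemma pd1_cov (hn_meas : Measurable n)
    (hSg_symm : ∀ v v' : EuclideanSpace ℝ (Fin m), ⟪Sg v, v'⟫ = ⟪v, Sg v'⟫)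
    (hSg_pos : ∀ v : EuclideanSpace ℝ (Fin m), v ≠ 0 → 0 < ⟪v, Sg v⟫)
    (hgauss : ∀ a : EuclideanSpace ℝ (Fin m),
      Pr.map (fun ω => ⟪a, n ω⟫) = gaussianReal 0 (⟪a, Sg a⟫).toNNReal)
    (u w : EuclideanSpace ℝ (Fin m)) :
    ∫ ω, ⟪u, n ω⟫ * ⟪w, n ω⟫ ∂Pr = ⟪u, Sg w⟫ := by
  have hId : ∀ ω, ⟪u + w, n ω⟫ ^ 2
      = ⟪u, n ω⟫ ^ 2 + (2 * (⟪u, n ω⟫ * ⟪w, n ω⟫) + ⟪w, n ω⟫ ^ 2) := by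
    intro ω
    rw [inner_add_left]
    ring
  have hint_uw := pd1_int2 hn_meas hSg_pos hgauss u w
  have hintu := pd1_intsq hn_meas hSg_pos hgauss u
  have hintw := pd1_intsq hn_meas hSg_pos hgauss w
  have e1 : ∫ ω, ⟪u + w, n ω⟫ ^ 2 ∂Pr
      = ∫ ω, (⟪u, n ω⟫ ^ 2 + (2 * (⟪u, n ω⟫ * ⟪w, n ω⟫) + ⟪w, n ω⟫ ^ 2)) ∂Pr := by
    congr 1
    funext ω
    exact hId ω
  have e2 : ∫ ω, (⟪u, n ω⟫ ^ 2 + (2 * (⟪u, n ω⟫ * ⟪w, n ω⟫) + ⟪w, n ω⟫ ^ 2)) ∂Pr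
      = (∫ ω, ⟪u, n ω⟫ ^ 2 ∂Pr)
        + ∫ ω, (2 * (⟪u, n ω⟫ * ⟪w, n ω⟫) + ⟪w, n ω⟫ ^ 2) ∂Pr :=
    integral_add hintu ((hint_uw.const_mul 2).add hintw)
  have e3 : ∫ ω, (2 * (⟪u, n ω⟫ * ⟪w, n ω⟫) + ⟪w, n ω⟫ ^ 2) ∂Pr
      = (∫ ω, 2 * (⟪u, n ω⟫ * ⟪w, n ω⟫) ∂Pr) + ∫ ω, ⟪w, n ω⟫ ^ 2 ∂Pr :=
    integral_add (hint_uw.const_mul 2) hintw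
  have e4 : ∫ ω, 2 * (⟪u, n ω⟫ * ⟪w, n ω⟫) ∂Pr
      = 2 * ∫ ω, ⟪u, n ω⟫ * ⟪w, n ω⟫ ∂Pr := integral_const_mul 2 _
  rw [e2, e3, e4] at e1
  rw [pd1_sq_integral hn_meas hSg_pos hgauss (u + w),
    pd1_sq_integral hn_meas hSg_pos hgauss u,
    pd1_sq_integral hn_meas hSg_pos hgauss w] at e1
  have hx : ⟪u + w, Sg (u + w)⟫
      = ⟪u, Sg u⟫ + 2 * ⟪u, Sg w⟫ + ⟪w, Sg w⟫ := by
    rw [map_add, inner_add_left, inner_add_right, inner_add_right]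
    have : ⟪w, Sg u⟫ = ⟪u, Sg w⟫ := by
      rw [← hSg_symm u w, real_inner_comm]
    rw [this]
    ring
  rw [hx] at e1
  linarith

lemma pd1_triple_zero (hn_meas : Measurable n)
    (hSg_pos : ∀ v : EuclideanSpace ℝ (Fin m), v ≠ 0 → 0 < ⟪v, Sg v⟫)
    (hgauss : ∀ a : EuclideanSpace ℝ (Fin m),
      Pr.map (fun ω => ⟪a, n ω⟫) = gaussianReal 0 (⟪a, Sg a⟫).toNNReal)
    (x y z : EuclideanSpace ℝ (Fin m)) :
    ∫ ω, ⟪x, n ω⟫ * ⟪y, n ω⟫ * ⟪z, n ω⟫ ∂Pr = 0 := by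
  have hc := pd1_intcube hn_meas hSg_pos hgauss
  have hS := pd1_cube_zero hn_meas hgauss
  have hId : ∀ ω, (6 : ℝ) * (⟪x, n ω⟫ * ⟪y, n ω⟫ * ⟪z, n ω⟫)
      = ⟪x + y + z, n ω⟫ ^ 3 - ⟪x + y, n ω⟫ ^ 3 - ⟪y + z, n ω⟫ ^ 3 - ⟪x + z, n ω⟫ ^ 3
        + ⟪x, n ω⟫ ^ 3 + ⟪y, n ω⟫ ^ 3 + ⟪z, n ω⟫ ^ 3 := by
    intro ω
    simp only [inner_add_left]
    ring
  have e1 : (6 : ℝ) * ∫ ω, ⟪x, n ω⟫ * ⟪y, n ω⟫ * ⟪z, n ω⟫ ∂Pr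
      = ∫ ω, ((6 : ℝ) * (⟪x, n ω⟫ * ⟪y, n ω⟫ * ⟪z, n ω⟫)) ∂Pr :=
    (integral_const_mul _ _).symm
  have e2 : ∫ ω, ((6 : ℝ) * (⟪x, n ω⟫ * ⟪y, n ω⟫ * ⟪z, n ω⟫)) ∂Pr
      = ∫ ω, (⟪x + y + z, n ω⟫ ^ 3 - ⟪x + y, n ω⟫ ^ 3 - ⟪y + z, n ω⟫ ^ 3
          - ⟪x + z, n ω⟫ ^ 3 + ⟪x, n ω⟫ ^ 3 + ⟪y, n ω⟫ ^ 3 + ⟪z, n ω⟫ ^ 3) ∂Pr := by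
    congr 1
    funext ω
    exact hId ω
  have i2 : Integrable (fun ω => ⟪x + y + z, n ω⟫ ^ 3 - ⟪x + y, n ω⟫ ^ 3) Pr :=
    (hc _).sub (hc _)
  have i3 : Integrable (fun ω => ⟪x + y + z, n ω⟫ ^ 3 - ⟪x + y, n ω⟫ ^ 3
      - ⟪y + z, n ω⟫ ^ 3) Pr := i2.sub (hc _)
  have i4 : Integrable (fun ω => ⟪x + y + z, n ω⟫ ^ 3 - ⟪x + y, n ω⟫ ^ 3
      - ⟪y + z, n ω⟫ ^ 3 - ⟪x + z, n ω⟫ ^ 3) Pr := i3.sub (hc _)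
  have i5 : Integrable (fun ω => ⟪x + y + z, n ω⟫ ^ 3 - ⟪x + y, n ω⟫ ^ 3
      - ⟪y + z, n ω⟫ ^ 3 - ⟪x + z, n ω⟫ ^ 3 + ⟪x, n ω⟫ ^ 3) Pr := i4.add (hc _)
  have i6 : Integrable (fun ω => ⟪x + y + z, n ω⟫ ^ 3 - ⟪x + y, n ω⟫ ^ 3
      - ⟪y + z, n ω⟫ ^ 3 - ⟪x + z, n ω⟫ ^ 3 + ⟪x, n ω⟫ ^ 3 + ⟪y, n ω⟫ ^ 3) Pr :=
    i5.add (hc _)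
  have e3 : ∫ ω, (⟪x + y + z, n ω⟫ ^ 3 - ⟪x + y, n ω⟫ ^ 3 - ⟪y + z, n ω⟫ ^ 3
      - ⟪x + z, n ω⟫ ^ 3 + ⟪x, n ω⟫ ^ 3 + ⟪y, n ω⟫ ^ 3 + ⟪z, n ω⟫ ^ 3) ∂Pr
      = (∫ ω, (⟪x + y + z, n ω⟫ ^ 3 - ⟪x + y, n ω⟫ ^ 3 - ⟪y + z, n ω⟫ ^ 3
        - ⟪x + z, n ω⟫ ^ 3 + ⟪x, n ω⟫ ^ 3 + ⟪y, n ω⟫ ^ 3) ∂Pr)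
        + ∫ ω, ⟪z, n ω⟫ ^ 3 ∂Pr := integral_add i6 (hc _)
  have e4 : ∫ ω, (⟪x + y + z, n ω⟫ ^ 3 - ⟪x + y, n ω⟫ ^ 3 - ⟪y + z, n ω⟫ ^ 3
      - ⟪x + z, n ω⟫ ^ 3 + ⟪x, n ω⟫ ^ 3 + ⟪y, n ω⟫ ^ 3) ∂Pr
      = (∫ ω, (⟪x + y + z, n ω⟫ ^ 3 - ⟪x + y, n ω⟫ ^ 3 - ⟪y + z, n ω⟫ ^ 3
        - ⟪x + z, n ω⟫ ^ 3 + ⟪x, n ω⟫ ^ 3) ∂Pr)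
        + ∫ ω, ⟪y, n ω⟫ ^ 3 ∂Pr := integral_add i5 (hc _)
  have e5 : ∫ ω, (⟪x + y + z, n ω⟫ ^ 3 - ⟪x + y, n ω⟫ ^ 3 - ⟪y + z, n ω⟫ ^ 3
      - ⟪x + z, n ω⟫ ^ 3 + ⟪x, n ω⟫ ^ 3) ∂Pr
      = (∫ ω, (⟪x + y + z, n ω⟫ ^ 3 - ⟪x + y, n ω⟫ ^ 3 - ⟪y + z, n ω⟫ ^ 3
        - ⟪x + z, n ω⟫ ^ 3) ∂Pr)
        + ∫ ω, ⟪x, n ω⟫ ^ 3 ∂Pr := integral_add i4 (hc _)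
  have e6 : ∫ ω, (⟪x + y + z, n ω⟫ ^ 3 - ⟪x + y, n ω⟫ ^ 3 - ⟪y + z, n ω⟫ ^ 3
      - ⟪x + z, n ω⟫ ^ 3) ∂Pr
      = (∫ ω, (⟪x + y + z, n ω⟫ ^ 3 - ⟪x + y, n ω⟫ ^ 3 - ⟪y + z, n ω⟫ ^ 3) ∂Pr)
        - ∫ ω, ⟪x + z, n ω⟫ ^ 3 ∂Pr := integral_sub i3 (hc _)
  have e7 : ∫ ω, (⟪x + y + z, n ω⟫ ^ 3 - ⟪x + y, n ω⟫ ^ 3 - ⟪y + z, n ω⟫ ^ 3) ∂Pr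
      = (∫ ω, (⟪x + y + z, n ω⟫ ^ 3 - ⟪x + y, n ω⟫ ^ 3) ∂Pr)
        - ∫ ω, ⟪y + z, n ω⟫ ^ 3 ∂Pr := integral_sub i2 (hc _)
  have e8 : ∫ ω, (⟪x + y + z, n ω⟫ ^ 3 - ⟪x + y, n ω⟫ ^ 3) ∂Pr
      = (∫ ω, ⟪x + y + z, n ω⟫ ^ 3 ∂Pr)
        - ∫ ω, ⟪x + y, n ω⟫ ^ 3 ∂Pr := integral_sub (hc _) (hc _)
  rw [e3, e4, e5, e6, e7, e8, hS (x + y + z), hS (x + y), hS (y + z), hS (x + z),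
    hS x, hS y, hS z] at e2
  rw [e2] at e1
  linarith

end Moments

/-- **Gaussian quadratic-form identity underlying the PD1 estimator.**
If `n ∼ N(0, Σ)` on `ℝ^m` (`Σ` positive definite, here characterized by the fact that every
linear functional `⟪a, n⟫` is a real Gaussian with mean `0` and variance `⟪a, Σ a⟫`), then for
any `P ∈ ℝ^{d×d}`, `a ∈ ℝ^d`, `B ∈ ℝ^{d×m}`,
`E[((a + Bn)ᵀ P (a + Bn)) Σ⁻¹ n] = Bᵀ (P + Pᵀ) a`;
in particular, if `P` is symmetric this equals `2 Bᵀ P a`. -/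
theorem gaussian_quadratic_outer_identity (m d : ℕ)
    (Ω : Type) [MeasurableSpace Ω] (Pr : MeasureTheory.Measure Ω)
    [MeasureTheory.IsProbabilityMeasure Pr]
    (n : Ω → EuclideanSpace ℝ (Fin m)) (hn_meas : Measurable n)
    (Sg Sginv : EuclideanSpace ℝ (Fin m) →L[ℝ] EuclideanSpace ℝ (Fin m))
    (hSg_symm : ∀ v v' : EuclideanSpace ℝ (Fin m), ⟪Sg v, v'⟫ = ⟪v, Sg v'⟫)
    (hSg_pos : ∀ v : EuclideanSpace ℝ (Fin m), v ≠ 0 → 0 < ⟪v, Sg v⟫)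
    (hSginv₁ : Sginv ∘L Sg = ContinuousLinearMap.id ℝ (EuclideanSpace ℝ (Fin m)))
    (hSginv₂ : Sg ∘L Sginv = ContinuousLinearMap.id ℝ (EuclideanSpace ℝ (Fin m)))
    (hgauss : ∀ a : EuclideanSpace ℝ (Fin m),
      Pr.map (fun ω => ⟪a, n ω⟫) = ProbabilityTheory.gaussianReal 0 (⟪a, Sg a⟫).toNNReal)
    (P : EuclideanSpace ℝ (Fin d) →L[ℝ] EuclideanSpace ℝ (Fin d))
    (a : EuclideanSpace ℝ (Fin d))
    (B : EuclideanSpace ℝ (Fin m) →L[ℝ] EuclideanSpace ℝ (Fin d)) :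
    (∫ ω, (⟪a + B (n ω), P (a + B (n ω))⟫ • Sginv (n ω)) ∂Pr)
      = (ContinuousLinearMap.adjoint B) ((P + ContinuousLinearMap.adjoint P) a)
    ∧ ((∀ v v' : EuclideanSpace ℝ (Fin d), ⟪P v, v'⟫ = ⟪v, P v'⟫) →
        (∫ ω, (⟪a + B (n ω), P (a + B (n ω))⟫ • Sginv (n ω)) ∂Pr)
          = (2:ℝ) • (ContinuousLinearMap.adjoint B) (P a)) := by
  classical
  set v : EuclideanSpace ℝ (Fin m) :=
    (ContinuousLinearMap.adjoint B) ((P + ContinuousLinearMap.adjoint P) a) with hvdef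
  have h2 : ∀ y, Sg (Sginv y) = y := fun y => by
    have := congrArg (fun T => T y) hSginv₂
    simpa using this
  have hSginv_symm : ∀ u w : EuclideanSpace ℝ (Fin m), ⟪Sginv u, w⟫ = ⟪u, Sginv w⟫ := by
    intro u w
    conv_lhs => rw [← h2 w]
    rw [← hSg_symm (Sginv u) (Sginv w), h2 u]
  have hx : ∀ x : EuclideanSpace ℝ (Fin m),
      ∑ i, x i • EuclideanSpace.single i (1:ℝ) = x := by
    intro x
    simpa [EuclideanSpace.basisFun_apply, EuclideanSpace.basisFun_repr] using
      (EuclideanSpace.basisFun (Fin m) ℝ).sum_repr x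
  have hcoord : ∀ (x : EuclideanSpace ℝ (Fin m)) i,
      x i = ⟪EuclideanSpace.single i (1:ℝ), x⟫ := by
    intro x i
    rw [EuclideanSpace.inner_single_left]
    simp
  set e : Fin m → EuclideanSpace ℝ (Fin m) :=
    fun i => EuclideanSpace.single i (1:ℝ) with hedef
  set c : Fin m → Fin m → ℝ :=
    fun i j => ⟪B (e i), P (B (e j))⟫ with hcdef
  -- expansion of the quadratic form
  have hBx : ∀ x : EuclideanSpace ℝ (Fin m), ⟪B x, P (B x)⟫
      = ∑ i, ∑ j, ⟪e i, x⟫ * ⟪e j, x⟫ * c i j := by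
    intro x
    conv_lhs => rw [← hx x]
    rw [map_sum B, sum_inner]
    refine Finset.sum_congr rfl fun i _ => ?_
    rw [map_sum P, inner_sum]
    refine Finset.sum_congr rfl fun j _ => ?_
    simp only [_root_.map_smul, real_inner_smul_left, real_inner_smul_right]
    rw [hcoord x i, hcoord x j]
    ring
  have hq : ∀ ω : Ω, ⟪a + B (n ω), P (a + B (n ω))⟫
      = ⟪a, P a⟫ + ⟪v, n ω⟫ + ∑ i, ∑ j, ⟪e i, n ω⟫ * ⟪e j, n ω⟫ * c i j := by
    intro ω
    rw [← hBx (n ω)]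
    rw [map_add P, inner_add_left, inner_add_right, inner_add_right]
    have hv1 : ⟪v, n ω⟫ = ⟪a, P (B (n ω))⟫ + ⟪B (n ω), P a⟫ := by
      rw [hvdef, ContinuousLinearMap.adjoint_inner_left]
      rw [ContinuousLinearMap.add_apply, inner_add_left,
        ContinuousLinearMap.adjoint_inner_left]
      rw [real_inner_comm (P a) (B (n ω))]
      ring
    rw [hv1]
    ring
  -- scalar key lemma
  have keyInt : ∀ w : EuclideanSpace ℝ (Fin m),
      Integrable (fun ω => ⟪a + B (n ω), P (a + B (n ω))⟫ * ⟪w, n ω⟫) Pr := by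
    intro w
    have hsplit : (fun ω => ⟪a + B (n ω), P (a + B (n ω))⟫ * ⟪w, n ω⟫)
        = fun ω => ⟪a, P a⟫ * ⟪w, n ω⟫ + ⟪v, n ω⟫ * ⟪w, n ω⟫
          + ∑ i, ∑ j, (⟪e i, n ω⟫ * ⟪e j, n ω⟫ * ⟪w, n ω⟫) * c i j := by
      funext ω
      rw [hq ω, add_mul, add_mul]
      congr 1
      rw [Finset.sum_mul]
      refine Finset.sum_congr rfl fun i _ => ?_
      rw [Finset.sum_mul]
      refine Finset.sum_congr rfl fun j _ => ?_
      ring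
    rw [hsplit]
    exact (((pd1_int1 hn_meas hSg_pos hgauss w).const_mul _).add
        (pd1_int2 hn_meas hSg_pos hgauss v w)).add
      (integrable_finset_sum _ fun i _ => integrable_finset_sum _ fun j _ =>
        (pd1_int3 hn_meas hSg_pos hgauss (e i) (e j) w).mul_const _)
  have keyVal : ∀ w : EuclideanSpace ℝ (Fin m),
      ∫ ω, ⟪a + B (n ω), P (a + B (n ω))⟫ * ⟪w, n ω⟫ ∂Pr = ⟪v, Sg w⟫ := by
    intro w
    have hsplit : (fun ω => ⟪a + B (n ω), P (a + B (n ω))⟫ * ⟪w, n ω⟫)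
        = fun ω => ⟪a, P a⟫ * ⟪w, n ω⟫ + ⟪v, n ω⟫ * ⟪w, n ω⟫
          + ∑ i, ∑ j, (⟪e i, n ω⟫ * ⟪e j, n ω⟫ * ⟪w, n ω⟫) * c i j := by
      funext ω
      rw [hq ω, add_mul, add_mul]
      congr 1
      rw [Finset.sum_mul]
      refine Finset.sum_congr rfl fun i _ => ?_
      rw [Finset.sum_mul]
      refine Finset.sum_congr rfl fun j _ => ?_
      ring
    rw [hsplit]
    have i1 : Integrable (fun ω => ⟪a, P a⟫ * ⟪w, n ω⟫) Pr :=
      (pd1_int1 hn_meas hSg_pos hgauss w).const_mul _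
    have i2 : Integrable (fun ω => ⟪v, n ω⟫ * ⟪w, n ω⟫) Pr :=
      pd1_int2 hn_meas hSg_pos hgauss v w
    have i3 : Integrable (fun ω =>
        ∑ i, ∑ j, (⟪e i, n ω⟫ * ⟪e j, n ω⟫ * ⟪w, n ω⟫) * c i j) Pr :=
      integrable_finset_sum _ fun i _ => integrable_finset_sum _ fun j _ =>
        (pd1_int3 hn_meas hSg_pos hgauss (e i) (e j) w).mul_const _
    have eA : ∫ ω, (⟪a, P a⟫ * ⟪w, n ω⟫ + ⟪v, n ω⟫ * ⟪w, n ω⟫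
          + ∑ i, ∑ j, (⟪e i, n ω⟫ * ⟪e j, n ω⟫ * ⟪w, n ω⟫) * c i j) ∂Pr
        = (∫ ω, (⟪a, P a⟫ * ⟪w, n ω⟫ + ⟪v, n ω⟫ * ⟪w, n ω⟫) ∂Pr)
          + ∫ ω, (∑ i, ∑ j, (⟪e i, n ω⟫ * ⟪e j, n ω⟫ * ⟪w, n ω⟫) * c i j) ∂Pr :=
      integral_add (i1.add i2) i3
    have eB : ∫ ω, (⟪a, P a⟫ * ⟪w, n ω⟫ + ⟪v, n ω⟫ * ⟪w, n ω⟫) ∂Pr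
        = (∫ ω, ⟪a, P a⟫ * ⟪w, n ω⟫ ∂Pr) + ∫ ω, ⟪v, n ω⟫ * ⟪w, n ω⟫ ∂Pr :=
      integral_add i1 i2
    have eC : ∫ ω, ⟪a, P a⟫ * ⟪w, n ω⟫ ∂Pr = 0 := by
      rw [integral_const_mul, pd1_mean_zero hn_meas hgauss w, mul_zero]
    have eD : ∫ ω, (∑ i, ∑ j, (⟪e i, n ω⟫ * ⟪e j, n ω⟫ * ⟪w, n ω⟫) * c i j) ∂Pr
        = 0 := by
      rw [integral_finset_sum _ (fun i _ => integrable_finset_sum _ fun j _ =>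
        (pd1_int3 hn_meas hSg_pos hgauss (e i) (e j) w).mul_const _)]
      refine Finset.sum_eq_zero fun i _ => ?_
      rw [integral_finset_sum _ (fun j _ =>
        (pd1_int3 hn_meas hSg_pos hgauss (e i) (e j) w).mul_const _)]
      refine Finset.sum_eq_zero fun j _ => ?_
      rw [integral_mul_const, pd1_triple_zero hn_meas hSg_pos hgauss (e i) (e j) w,
        zero_mul]
    rw [eA, eB, eC, eD, pd1_cov hn_meas hSg_symm hSg_pos hgauss v w]
    ring
  -- vector integral
  have hvec : (fun ω => ⟪a + B (n ω), P (a + B (n ω))⟫ • Sginv (n ω))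
      = fun ω => ∑ i, (⟪a + B (n ω), P (a + B (n ω))⟫ * ⟪Sginv (e i), n ω⟫) • (e i) := by
    funext ω
    conv_lhs => rw [← hx (Sginv (n ω))]
    rw [Finset.smul_sum]
    refine Finset.sum_congr rfl fun i _ => ?_
    rw [smul_smul]
    congr 1
    rw [hcoord (Sginv (n ω)) i, ← hSginv_symm]
  have part1 : (∫ ω, (⟪a + B (n ω), P (a + B (n ω))⟫ • Sginv (n ω)) ∂Pr) = v := by
    rw [hvec]
    rw [integral_finset_sum _ (fun i _ => (keyInt (Sginv (e i))).smul_const _)]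
    have : ∀ i, (∫ ω, (⟪a + B (n ω), P (a + B (n ω))⟫ * ⟪Sginv (e i), n ω⟫) ∂Pr) • (e i)
        = v i • e i := by
      intro i
      rw [keyVal (Sginv (e i)), h2 (e i)]
      congr 1
      rw [hedef]
      rw [real_inner_comm]
      rw [EuclideanSpace.inner_single_left]
      simp
    calc ∑ i, ∫ ω, (⟪a + B (n ω), P (a + B (n ω))⟫ * ⟪Sginv (e i), n ω⟫) • (e i) ∂Pr
        = ∑ i, (∫ ω, ⟪a + B (n ω), P (a + B (n ω))⟫ * ⟪Sginv (e i), n ω⟫ ∂Pr) • (e i) := by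
          refine Finset.sum_congr rfl fun i _ => ?_
          exact integral_smul_const _ _
      _ = ∑ i, v i • e i := Finset.sum_congr rfl fun i _ => this i
      _ = v := hx v
  refine ⟨part1, fun hP => ?_⟩
  rw [part1, hvdef]
  have hadj : ContinuousLinearMap.adjoint P = P := by
    apply ContinuousLinearMap.ext
    intro x
    apply ext_inner_right ℝ
    intro y
    rw [ContinuousLinearMap.adjoint_inner_left, ← hP]
  rw [hadj]
  have : (P + P) a = (2:ℝ) • P a := by
    rw [ContinuousLinearMap.add_apply, two_smul]
  rw [this, _root_.map_smul]
end
end
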